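/- Define for p ∈ ℝ³ and c ≥ 1 the relativistic velocity p̂ = γ p with γ = (1 + |p|²/c²)^{-1/2}. Then for any unit vector x̄ ∈ ℝ³ with 1 - c⁻¹ p̂ · x̄ ≠ 0, the gradient with respect to p of the function p ↦ γ (1 - c⁻¹ p̂ · x̄)⁻¹ equals γ² (1 - c⁻¹ p̂ · x̄)⁻² (c⁻¹ x̄ - c⁻² p̂). -/
import Mathlib


open RealInnerProductSpace

/-- The relativistic factor `γ = (1 + |p|²/c²)^{-1/2}`. -/
noncomputable def gam (c : ℝ) (p : EuclideanSpace ℝ (Fin 3)) : ℝ :=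
  (Real.sqrt (1 + ‖p‖ ^ 2 / c ^ 2))⁻¹

/-- The relativistic velocity `p̂ = γ p`. -/
noncomputable def phat (c : ℝ) (p : EuclideanSpace ℝ (Fin 3)) : EuclideanSpace ℝ (Fin 3) :=
  gam c p • p

private lemma aux1 (a b x : ℝ) (ha : a ≠ 0) : a - b * x = a * (1 - b * (a⁻¹ * x)) := by
  field_simp


theorem stmt5 (c : ℝ) (hc : 1 ≤ c) (xb : EuclideanSpace ℝ (Fin 3)) (hxb : ‖xb‖ = 1)
    (p : EuclideanSpace ℝ (Fin 3)) (hne : 1 - c⁻¹ * ⟪phat c p, xb⟫ ≠ 0) :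
    gradient (fun q => gam c q * (1 - c⁻¹ * ⟪phat c q, xb⟫)⁻¹) p
      = ((gam c p) ^ 2 * ((1 - c⁻¹ * ⟪phat c p, xb⟫)⁻¹) ^ 2) •
          (c⁻¹ • xb - c⁻¹ ^ 2 • phat c p) := by
  have hc0 : (0:ℝ) < c := lt_of_lt_of_le one_pos hc
  set f : EuclideanSpace ℝ (Fin 3) → ℝ :=
    fun q => Real.sqrt (1 + ‖q‖ ^ 2 / c ^ 2) - c⁻¹ * ⟪q, xb⟫ with hf
  have hupos : ∀ q : EuclideanSpace ℝ (Fin 3), (0:ℝ) < 1 + ‖q‖ ^ 2 / c ^ 2 :=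
    fun q => by positivity
  have hspos : ∀ q : EuclideanSpace ℝ (Fin 3), 0 < Real.sqrt (1 + ‖q‖ ^ 2 / c ^ 2) :=
    fun q => Real.sqrt_pos.mpr (hupos q)
  set sp := Real.sqrt (1 + ‖p‖ ^ 2 / c ^ 2) with hsp
  have hsp0 : sp ≠ 0 := ne_of_gt (hspos p)
  set t := 1 - c⁻¹ * ⟪phat c p, xb⟫ with ht
  -- rewrite the function
  have hfun : (fun q => gam c q * (1 - c⁻¹ * ⟪phat c q, xb⟫)⁻¹) = fun q => (f q)⁻¹ := by
    funext q
    set a := Real.sqrt (1 + ‖q‖ ^ 2 / c ^ 2) with ha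
    have ha0 : a ≠ 0 := ne_of_gt (hspos q)
    have h1 : ⟪phat c q, xb⟫ = a⁻¹ * ⟪q, xb⟫ := by
      rw [phat, real_inner_smul_left, gam]
    rw [gam, h1, hf]
    have h2 : 1 - c⁻¹ * (a⁻¹ * ⟪q, xb⟫) = (a - c⁻¹ * ⟪q, xb⟫) * a⁻¹ := by
      rw [sub_mul, mul_inv_cancel₀ ha0]; ring
    rw [h2, mul_inv_rev, inv_inv, ← mul_assoc, inv_mul_cancel₀ ha0, one_mul]
  have hpin : ⟪phat c p, xb⟫ = sp⁻¹ * ⟪p, xb⟫ := by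
    rw [phat, real_inner_smul_left, gam]
  have hfp : f p = sp * t := by
    rw [ht, hpin]
    simp only [hf, ← hsp]
    exact aux1 sp c⁻¹ ⟪p, xb⟫ hsp0
  have hfne : f p ≠ 0 := by rw [hfp]; exact mul_ne_zero hsp0 hne
  -- derivative of f
  have hnorm : HasFDerivAt (fun q : EuclideanSpace ℝ (Fin 3) => ‖q‖ ^ 2)
      (2 • innerSL ℝ p) p :=
    (hasStrictFDerivAt_norm_sq p).hasFDerivAt
  have hu : HasFDerivAt (fun q : EuclideanSpace ℝ (Fin 3) => 1 + ‖q‖ ^ 2 / c ^ 2)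
      ((c ^ 2)⁻¹ • (2 • innerSL ℝ p)) p := by
    have h := (hnorm.const_mul ((c ^ 2)⁻¹)).const_add 1
    simpa [div_eq_inv_mul, mul_comm] using h
  have hs : HasFDerivAt (fun q : EuclideanSpace ℝ (Fin 3) => Real.sqrt (1 + ‖q‖ ^ 2 / c ^ 2))
      ((1 / (2 * sp)) • ((c ^ 2)⁻¹ • (2 • innerSL ℝ p))) p :=
    hu.sqrt (ne_of_gt (hupos p))
  have hxb' : HasFDerivAt (fun q : EuclideanSpace ℝ (Fin 3) => c⁻¹ * ⟪q, xb⟫)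
      (c⁻¹ • innerSL ℝ xb) p := by
    have h := ((innerSL ℝ xb).hasFDerivAt (x := p)).const_mul c⁻¹
    have he : (fun q : EuclideanSpace ℝ (Fin 3) => c⁻¹ * ⟪q, xb⟫)
        = fun y => c⁻¹ * (innerSL ℝ xb) y := by
      funext q
      simp only [innerSL_apply_apply]
      rw [real_inner_comm]
    rw [he]
    simpa [smul_eq_mul] using h
  have hF : HasFDerivAt f
      ((1 / (2 * sp)) • ((c ^ 2)⁻¹ • (2 • innerSL ℝ p)) - c⁻¹ • innerSL ℝ xb) p :=
    hs.sub hxb'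
  have hinv : HasFDerivAt (fun q => (f q)⁻¹)
      ((-(f p ^ 2)⁻¹) • ((1 / (2 * sp)) • ((c ^ 2)⁻¹ • (2 • innerSL ℝ p))
        - c⁻¹ • innerSL ℝ xb)) p :=
    (hasDerivAt_inv hfne).comp_hasFDerivAt p hF
  rw [hfun, hinv.hasGradientAt.gradient]
  apply (InnerProductSpace.toDual ℝ (EuclideanSpace ℝ (Fin 3))).injective
  rw [LinearIsometryEquiv.apply_symm_apply]
  apply ContinuousLinearMap.ext
  intro v
  rw [InnerProductSpace.toDual_apply_apply, hfp]
  simp only [ContinuousLinearMap.smul_apply, ContinuousLinearMap.sub_apply,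
    smul_eq_mul, innerSL_apply_apply, inner_sub_left, inner_smul_left, RCLike.conj_to_real,
    phat, gam, ← hsp, real_inner_smul_left, conj_trivial]
  clear_value sp t
  clear hfun hfp hfne hnorm hu hs hxb' hF hinv hf hsp ht
  field_simp
  ring
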